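/- arXiv:2309.00691 — 2 statements merged into one kernel-verified Lean document; each statement's English description precedes it below -/
import Mathlib

section
/- Fix l, n ∈ ℕ with l, n ≥ 1 and M > 0, and set I = [-M, M]. Define f(λ) = (1, λ^l, 0) ∈ ℝ³ and the diagonal matrix a(λ) = diag(0, 0, |λ|^n). Then there exist constants C > 0 and δ₀ > 0 such that for every δ ∈ (0, δ₀) and every unit vector ξ = (ξ₀, ξ₁, ξ₂) ∈ ℝ³ (|ξ| = 1), the Lebesgue measure of the set {λ ∈ I : (ξ₀ + λ^l ξ₁)² + |λ|^n ξ₂² ≤ δ} is at most C δ^α, where α = min{1/(2l), 1/n}. -/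
/-!
Split according to which coordinate of the unit vector `ξ` is not small. If `ξ₂² ≥ c`, the
diffusion term forces `|λ|ⁿ ≤ δ / c`, a set of measure `≲ δ^(1/n)`. If `|ξ₁| ≥ c`, the
convection term forces `λ^l` into an interval of length `≲ √δ`, whose preimage under `λ ↦ λ^l`
has measure `≲ δ^(1/(2l))` because `x ↦ x^(1/l)` is `1/l`-Hölder. Otherwise `|ξ₀|` is close
to `1` and dominates `λ^l ξ₁` on `[-M, M]` once `c ≲ M^(-l)`, so the sublevel set is empty
for small `δ`.
-/

open MeasureTheory Set

lemma volume_setOf_nonneg_abs_pow_sub_le {l : ℕ} (hl : l ≠ 0) (c : ℝ) {ε : ℝ} (hε : 0 ≤ ε) :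
    volume {t : ℝ | 0 ≤ t ∧ |t ^ l - c| ≤ ε} ≤ ENNReal.ofReal ((2 * ε) ^ (l : ℝ)⁻¹) := by
  set a := max (c - ε) 0
  set b := max (c + ε) 0
  have hp : (0 : ℝ) ≤ (l : ℝ)⁻¹ := by positivity
  have hp1 : (l : ℝ)⁻¹ ≤ 1 := inv_le_one_of_one_le₀ (by exact_mod_cast Nat.one_le_iff_ne_zero.2 hl)
  have hba : b - a ≤ 2 * ε := by
    have := (abs_le.1 (abs_max_sub_max_le_abs (c + ε) (c - ε) 0)).2
    rwa [add_sub_sub_cancel, ← two_mul, abs_of_nonneg (by positivity)] at this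
  have hab : 0 ≤ b - a := sub_nonneg.2 (max_le_max (by linarith) le_rfl)
  have hsub : {t : ℝ | 0 ≤ t ∧ |t ^ l - c| ≤ ε} ⊆ Icc (a ^ (l : ℝ)⁻¹) (b ^ (l : ℝ)⁻¹) := by
    rintro t ⟨ht, htc⟩
    rw [abs_le] at htc
    rw [← Real.pow_rpow_inv_natCast ht hl]
    exact ⟨Real.rpow_le_rpow (le_max_right _ _) (max_le (by linarith) (by positivity)) hp,
      Real.rpow_le_rpow (by positivity) (le_max_of_le_left (by linarith)) hp⟩
  refine (measure_mono hsub).trans ?_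
  rw [Real.volume_Icc]
  refine ENNReal.ofReal_le_ofReal ?_
  calc b ^ (l : ℝ)⁻¹ - a ^ (l : ℝ)⁻¹ ≤ (b - a) ^ (l : ℝ)⁻¹ := by
        have := Real.rpow_add_le_add_rpow (le_max_right (c - ε) 0) hab hp hp1
        rw [add_sub_cancel] at this
        linarith
    _ ≤ (2 * ε) ^ (l : ℝ)⁻¹ := Real.rpow_le_rpow hab hba hp

lemma volume_setOf_abs_pow_sub_le {l : ℕ} (hl : l ≠ 0) (c : ℝ) {ε : ℝ} (hε : 0 ≤ ε) :
    volume {t : ℝ | |t ^ l - c| ≤ ε} ≤ ENNReal.ofReal (2 * (2 * ε) ^ (l : ℝ)⁻¹) := by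
  have hsub : {t : ℝ | |t ^ l - c| ≤ ε} ⊆ {t : ℝ | 0 ≤ t ∧ |t ^ l - c| ≤ ε} ∪
      Neg.neg ⁻¹' {t : ℝ | 0 ≤ t ∧ |t ^ l - (-1) ^ l * c| ≤ ε} := by
    intro t ht
    rcases le_total 0 t with h0 | h0
    · exact Or.inl ⟨h0, ht⟩
    · refine Or.inr ⟨neg_nonneg.2 h0, ?_⟩
      have : (-t) ^ l - (-1) ^ l * c = (-1) ^ l * (t ^ l - c) := by rw [neg_pow]; ring
      simpa [this, abs_mul] using ht
  calc volume {t : ℝ | |t ^ l - c| ≤ ε}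
      ≤ volume {t : ℝ | 0 ≤ t ∧ |t ^ l - c| ≤ ε} +
          volume {t : ℝ | 0 ≤ t ∧ |t ^ l - (-1) ^ l * c| ≤ ε} := by
        refine (measure_mono hsub).trans ((measure_union_le _ _).trans_eq ?_)
        rw [Measure.measure_preimage_neg]
    _ ≤ ENNReal.ofReal ((2 * ε) ^ (l : ℝ)⁻¹) + ENNReal.ofReal ((2 * ε) ^ (l : ℝ)⁻¹) :=
        add_le_add (volume_setOf_nonneg_abs_pow_sub_le hl c hε)
          (volume_setOf_nonneg_abs_pow_sub_le hl _ hε)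
    _ = ENNReal.ofReal (2 * (2 * ε) ^ (l : ℝ)⁻¹) := by
        rw [← ENNReal.ofReal_add (by positivity) (by positivity)]
        ring_nf

lemma mul_rpow_rpow_le_mul_rpow {K δ p q α : ℝ} (hK : 1 ≤ K) (hδ₀ : 0 < δ) (hδ₁ : δ ≤ 1)
    (hp₁ : p ≤ 1) (hα : α ≤ q * p) : (K * δ ^ q) ^ p ≤ K * δ ^ α := by
  rw [Real.mul_rpow (by positivity) (by positivity), ← Real.rpow_mul hδ₀.le]
  have hKp : K ^ p ≤ K := by
    calc K ^ p ≤ K ^ (1 : ℝ) := Real.rpow_le_rpow_of_exponent_le hK hp₁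
      _ = K := Real.rpow_one K
  exact mul_le_mul hKp (Real.rpow_le_rpow_of_exponent_ge hδ₀ hδ₁ hα) (by positivity)
    (by positivity)

/-- The sublevel set `{λ ∈ [-M, M] : |⟨f(λ), ξ⟩|² + ⟨a(λ)ξ, ξ⟩ ≤ δ}` of the symbol. -/
def symbolSublevelSet (l n : ℕ) (M ξ₀ ξ₁ ξ₂ δ : ℝ) : Set ℝ :=
  {t | t ∈ Icc (-M) M ∧ (ξ₀ + t ^ l * ξ₁) ^ 2 + |t| ^ n * ξ₂ ^ 2 ≤ δ}

section symbolSublevelSet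

variable {l n : ℕ} {M ξ₀ ξ₁ ξ₂ δ : ℝ}

lemma volume_symbolSublevelSet_le_of_le_sq (hn : n ≠ 0) {c : ℝ} (hc : 0 < c) (hξ₂ : c ≤ ξ₂ ^ 2)
    (hδ : 0 ≤ δ) :
    volume (symbolSublevelSet l n M ξ₀ ξ₁ ξ₂ δ) ≤
      ENNReal.ofReal (2 * (2 / c * δ) ^ (n : ℝ)⁻¹) := by
  have hsub : symbolSublevelSet l n M ξ₀ ξ₁ ξ₂ δ ⊆ {t : ℝ | |t ^ n - 0| ≤ δ / c} := by
    rintro t ⟨-, ht⟩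
    rw [mem_ofPred_eq, sub_zero, abs_pow, le_div_iff₀ hc]
    nlinarith [sq_nonneg (ξ₀ + t ^ l * ξ₁), pow_nonneg (abs_nonneg t) n]
  refine (measure_mono hsub).trans ((volume_setOf_abs_pow_sub_le hn 0 (by positivity)).trans ?_)
  rw [mul_div_assoc', div_mul_eq_mul_div]

lemma volume_symbolSublevelSet_le_of_le_abs (hl : l ≠ 0) {c : ℝ} (hc : 0 < c) (hξ₁ : c ≤ |ξ₁|) :
    volume (symbolSublevelSet l n M ξ₀ ξ₁ ξ₂ δ) ≤
      ENNReal.ofReal (2 * (2 / c * δ ^ (1 / 2 : ℝ)) ^ (l : ℝ)⁻¹) := by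
  have hξ₁₀ : ξ₁ ≠ 0 := abs_pos.1 (hc.trans_le hξ₁)
  have hsub : symbolSublevelSet l n M ξ₀ ξ₁ ξ₂ δ ⊆
      {t : ℝ | |t ^ l - (-ξ₀ / ξ₁)| ≤ √δ / c} := by
    rintro t ⟨-, ht⟩
    have hsq : (ξ₀ + t ^ l * ξ₁) ^ 2 ≤ δ := by
      nlinarith [mul_nonneg (pow_nonneg (abs_nonneg t) n) (sq_nonneg ξ₂)]
    have heq : t ^ l - (-ξ₀ / ξ₁) = (ξ₀ + t ^ l * ξ₁) / ξ₁ := by field_simp; ring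
    rw [mem_ofPred_eq, heq, abs_div]
    exact div_le_div₀ (Real.sqrt_nonneg δ) (Real.abs_le_sqrt hsq) hc hξ₁
  refine (measure_mono hsub).trans ((volume_setOf_abs_pow_sub_le hl _ (by positivity)).trans ?_)
  rw [Real.sqrt_eq_rpow, mul_div_assoc', div_mul_eq_mul_div]

lemma symbolSublevelSet_eq_empty (hξ₁ : |ξ₁| * M ^ l ≤ |ξ₀| / 2)
    (hδ : δ < ξ₀ ^ 2 / 4) : symbolSublevelSet l n M ξ₀ ξ₁ ξ₂ δ = ∅ := by
  refine eq_empty_iff_forall_notMem.2 fun t ⟨htM, ht⟩ ↦ ?_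
  have hdrift : |t ^ l * ξ₁| ≤ |ξ₀| / 2 := by
    rw [abs_mul, abs_pow, mul_comm]
    exact le_trans (by gcongr; exact abs_le.2 htM) hξ₁
  have hlow : |ξ₀| / 2 ≤ |ξ₀ + t ^ l * ξ₁| := by
    have := abs_sub_abs_le_abs_sub ξ₀ (-(t ^ l * ξ₁))
    rw [abs_neg, sub_neg_eq_add] at this
    linarith
  have : ξ₀ ^ 2 / 4 ≤ (ξ₀ + t ^ l * ξ₁) ^ 2 := by
    rw [← sq_abs (ξ₀ + t ^ l * ξ₁), ← sq_abs ξ₀]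
    nlinarith [abs_nonneg ξ₀]
  nlinarith [mul_nonneg (pow_nonneg (abs_nonneg t) n) (sq_nonneg ξ₂)]

lemma symbolSublevelSet_eq_empty_of_lt (hM : 0 ≤ M) (hξ : ξ₀ ^ 2 + ξ₁ ^ 2 + ξ₂ ^ 2 = 1)
    (hξ₁ : |ξ₁| < 1 / (4 * (1 + M ^ l))) (hξ₂ : ξ₂ ^ 2 < 1 / 4) (hδ : δ < 1 / 16) :
    symbolSublevelSet l n M ξ₀ ξ₁ ξ₂ δ = ∅ := by
  have hMl : 0 ≤ M ^ l := by positivity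
  have hξ₁M : |ξ₁| * M ^ l ≤ 1 / 4 := by
    calc |ξ₁| * M ^ l ≤ 1 / (4 * (1 + M ^ l)) * M ^ l := by gcongr
      _ ≤ 1 / 4 := by rw [div_mul_eq_mul_div, div_le_div_iff₀] <;> linarith
  have hξ₁_sq : ξ₁ ^ 2 ≤ 1 / 16 := by
    have : |ξ₁| ≤ 1 / 4 := hξ₁.le.trans (by rw [div_le_div_iff₀] <;> linarith)
    rw [← sq_abs]; nlinarith [abs_nonneg ξ₁]
  have hξ₀ : 1 / 2 ≤ |ξ₀| := by nlinarith [sq_abs ξ₀, abs_nonneg ξ₀]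
  exact symbolSublevelSet_eq_empty (by linarith) (by nlinarith)

end symbolSublevelSet

/-- Non-degeneracy estimate for the symbol of the 2D convection-diffusion equation:
for `f(λ) = (1, λ^l, 0)` and `a(λ) = diag(0,0,|λ|^n)`, the measure of
`{λ ∈ [-M,M] : (ξ₀ + λ^l ξ₁)² + |λ|^n ξ₂² ≤ δ}` is `≲ δ^{min(1/(2l), 1/n)}`
uniformly over unit vectors `(ξ₀,ξ₁,ξ₂)`. -/
theorem stmt_3 (l n : ℕ) (hl : 1 ≤ l) (hn : 1 ≤ n) (M : ℝ) (hM : 0 < M) :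
    ∃ C > 0, ∃ δ₀ > 0, ∀ δ : ℝ, 0 < δ → δ < δ₀ →
      ∀ ξ₀ ξ₁ ξ₂ : ℝ, ξ₀ ^ 2 + ξ₁ ^ 2 + ξ₂ ^ 2 = 1 →
        volume {t : ℝ | t ∈ Set.Icc (-M) M ∧
            (ξ₀ + t ^ l * ξ₁) ^ 2 + |t| ^ n * ξ₂ ^ 2 ≤ δ} ≤
          ENNReal.ofReal (C * δ ^ (min (1 / (2 * (l : ℝ))) (1 / (n : ℝ)))) := by
  set α := min (1 / (2 * (l : ℝ))) (1 / (n : ℝ))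
  set c : ℝ := 1 / (4 * (1 + M ^ l))
  have hc : 0 < c := by positivity
  have hc₄ : c ≤ 1 / 4 := by
    rw [div_le_div_iff₀ (by positivity) (by norm_num)]; linarith [pow_nonneg hM.le l]
  have hK : 1 ≤ 2 / c := by rw [le_div_iff₀ hc]; linarith
  refine ⟨2 * (2 / c), by positivity, 1 / 16, by norm_num, fun δ hδ₀ hδ ξ₀ ξ₁ ξ₂ hξ ↦ ?_⟩
  change volume (symbolSublevelSet l n M ξ₀ ξ₁ ξ₂ δ) ≤ _
  have hδ₁ : δ ≤ 1 := by linarith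
  have hinv {m : ℕ} (hm : 1 ≤ m) : (m : ℝ)⁻¹ ≤ 1 := inv_le_one_of_one_le₀ (by exact_mod_cast hm)
  by_cases hξ₂ : c ≤ ξ₂ ^ 2
  · refine (volume_symbolSublevelSet_le_of_le_sq (by omega) hc hξ₂ hδ₀.le).trans ?_
    have := mul_rpow_rpow_le_mul_rpow (q := 1) (α := α) hK hδ₀ hδ₁ (hinv hn)
      ((min_le_right _ _).trans_eq (by ring))
    rw [Real.rpow_one] at this
    rw [mul_assoc]
    gcongr
  by_cases hξ₁ : c ≤ |ξ₁|
  · refine (volume_symbolSublevelSet_le_of_le_abs (by omega) hc hξ₁).trans ?_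
    have := mul_rpow_rpow_le_mul_rpow (q := 1 / 2) (α := α) hK hδ₀ hδ₁ (hinv hl)
      ((min_le_left _ _).trans_eq (by ring))
    rw [mul_assoc]
    gcongr
  rw [not_le] at hξ₁ hξ₂
  rw [symbolSublevelSet_eq_empty_of_lt hM.le hξ hξ₁ (hξ₂.trans_le hc₄) hδ, measure_empty]
  exact zero_le
end

section
/- Let l ∈ ℕ, l ≥ 1, M > 0 and I = [-M, M]. Then there exist constants C > 0 and δ₀ > 0 such that for all δ ∈ (0, δ₀) and all (ξ₀, ξ₁) ∈ ℝ² with ξ₀² + ξ₁² ≥ 3/4 and ξ₁ ≥ 0, the Lebesgue measure of the set {λ ∈ I : |ξ₀ + λ^l ξ₁| ≤ √δ} is at most C δ^{1/(2l)}. -/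
open MeasureTheory

private lemma sub_pow_le_pow_sub' {l : ℕ} (hl : l ≠ 0) {s t : ℝ} (hs : 0 ≤ s) (hst : s ≤ t) :
    (t - s) ^ l ≤ t ^ l - s ^ l := by
  have h := pow_add_pow_le (sub_nonneg.2 hst) hs hl
  rw [sub_add_cancel] at h
  linarith

private lemma abs_sub_le_rpow' {l : ℕ} (hl : l ≠ 0) {s t ε : ℝ} (hε : 0 ≤ ε)
    (hs : 0 ≤ s) (ht : 0 ≤ t) (h : |t ^ l - s ^ l| ≤ ε) :
    |t - s| ≤ ε ^ ((1 : ℝ) / l) := by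
  have hl' : (0 : ℝ) < l := by exact_mod_cast Nat.pos_of_ne_zero hl
  wlog hst : s ≤ t generalizing s t
  · rw [abs_sub_comm] at h ⊢
    exact this ht hs h (le_of_not_ge hst)
  have h1 : (t - s) ^ l ≤ ε := by
    have h2 := sub_pow_le_pow_sub' hl hs hst
    have h3 : t ^ l - s ^ l ≤ |t ^ l - s ^ l| := le_abs_self _
    linarith
  have hts : 0 ≤ t - s := sub_nonneg.2 hst
  rw [abs_of_nonneg hts]
  calc t - s = ((t - s) ^ l) ^ ((1 : ℝ) / l) := by
        rw [← Real.rpow_natCast (t - s) l, ← Real.rpow_mul hts, mul_one_div,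
          div_self (ne_of_gt hl'), Real.rpow_one]
    _ ≤ ε ^ ((1 : ℝ) / l) := Real.rpow_le_rpow (by positivity) h1 (by positivity)

/-- One-dimensional non-degeneracy estimate for the conservation law symbol
`ξ₀ + λ^l ξ₁`: for `ξ₀² + ξ₁² ≥ 3/4`, `ξ₁ ≥ 0`, the measure of
`{λ ∈ [-M,M] : |ξ₀ + λ^l ξ₁| ≤ √δ}` is `≲ δ^{1/(2l)}`. -/
theorem stmt_4 (l : ℕ) (hl : 1 ≤ l) (M : ℝ) (hM : 0 < M) :
    ∃ C > 0, ∃ δ₀ > 0, ∀ δ : ℝ, 0 < δ → δ < δ₀ →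
      ∀ ξ₀ ξ₁ : ℝ, 3 / 4 ≤ ξ₀ ^ 2 + ξ₁ ^ 2 → 0 ≤ ξ₁ →
        volume {t : ℝ | t ∈ Set.Icc (-M) M ∧ |ξ₀ + t ^ l * ξ₁| ≤ Real.sqrt δ} ≤
          ENNReal.ofReal (C * δ ^ (1 / (2 * (l : ℝ)))) := by
  have hl0 : l ≠ 0 := Nat.one_le_iff_ne_zero.1 hl
  have hlR : (0 : ℝ) < l := by exact_mod_cast Nat.pos_of_ne_zero hl0
  set c : ℝ := min (1 / 2) (1 / (4 * M ^ l)) with hc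
  have hc0 : 0 < c := lt_min (by norm_num) (by positivity)
  refine ⟨2 * (2 / c) ^ ((1 : ℝ) / l), by positivity, 1 / 16, by norm_num, ?_⟩
  intro δ hδ hδ' ξ₀ ξ₁ hξ hξ1
  set S := {t : ℝ | t ∈ Set.Icc (-M) M ∧ |ξ₀ + t ^ l * ξ₁| ≤ Real.sqrt δ} with hS
  by_cases h1 : ξ₁ < c
  · -- small ξ₁ : the set is empty
    have hempty : S = ∅ := by
      ext t
      simp only [hS, Set.mem_setOf_eq, Set.mem_empty_iff_false, iff_false, not_and,
        Set.mem_Icc]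
      rintro ⟨htl, htr⟩
      have habs : |t| ≤ M := abs_le.2 ⟨htl, htr⟩
      have h2 : |t ^ l * ξ₁| ≤ 1 / 4 := by
        rw [abs_mul, abs_pow, abs_of_nonneg hξ1]
        have h3 : |t| ^ l ≤ M ^ l := pow_le_pow_left₀ (abs_nonneg t) habs l
        have h4 : ξ₁ ≤ 1 / (4 * M ^ l) := le_of_lt (lt_of_lt_of_le h1 (min_le_right _ _))
        have hM' : (0 : ℝ) < M ^ l := by positivity
        calc |t| ^ l * ξ₁ ≤ M ^ l * (1 / (4 * M ^ l)) := by
              apply mul_le_mul h3 h4 hξ1 (le_of_lt hM')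
          _ = 1 / 4 := by field_simp
      have hξ0 : Real.sqrt (1 / 2) ≤ |ξ₀| := by
        have hc12 : c ≤ 1 / 2 := min_le_left _ _
        have hξ1c : ξ₁ ^ 2 ≤ 1 / 4 := by nlinarith
        have : (1 : ℝ) / 2 ≤ ξ₀ ^ 2 := by nlinarith
        calc Real.sqrt (1 / 2) ≤ Real.sqrt (ξ₀ ^ 2) := Real.sqrt_le_sqrt this
          _ = |ξ₀| := Real.sqrt_sq_eq_abs ξ₀
      have hsq : Real.sqrt (1 / 2) ≥ 0.7 := by
        rw [ge_iff_le, show (0.7 : ℝ) = 7 / 10 by norm_num, Real.le_sqrt (by norm_num) (by norm_num)]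
        norm_num
      have hδs : Real.sqrt δ < 1 / 4 := by
        rw [Real.sqrt_lt' (by norm_num)]
        nlinarith
      have hlow : |ξ₀| - |t ^ l * ξ₁| ≤ |ξ₀ + t ^ l * ξ₁| := by
        have := abs_sub_abs_le_abs_sub ξ₀ (-(t ^ l * ξ₁))
        simpa [sub_neg_eq_add] using this
      intro hcon
      nlinarith [hcon, hlow, h2, hξ0, hsq, hδs]
    rw [hempty]
    simp
  · push_neg at h1
    have hξ1' : 0 < ξ₁ := lt_of_lt_of_le hc0 h1
    set L : ℝ := (2 * Real.sqrt δ / c) ^ ((1 : ℝ) / l) with hL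
    have hδs0 : 0 < Real.sqrt δ := Real.sqrt_pos.2 hδ
    have hL0 : 0 ≤ L := by positivity
    -- key : two points of S with the same sign are within L
    have key : ∀ t ∈ S, ∀ s ∈ S, 0 ≤ s → 0 ≤ t → |t - s| ≤ L := by
      intro t ht s hs hs0 ht0
      have h2 : |t ^ l - s ^ l| ≤ 2 * Real.sqrt δ / c := by
        have hd : |(ξ₀ + t ^ l * ξ₁) - (ξ₀ + s ^ l * ξ₁)| ≤ 2 * Real.sqrt δ := by
          calc |(ξ₀ + t ^ l * ξ₁) - (ξ₀ + s ^ l * ξ₁)|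
              ≤ |ξ₀ + t ^ l * ξ₁| + |ξ₀ + s ^ l * ξ₁| := abs_sub _ _
            _ ≤ 2 * Real.sqrt δ := by
                have := ht.2; have := hs.2; linarith
        have hd2 : |t ^ l - s ^ l| * ξ₁ ≤ 2 * Real.sqrt δ := by
          have : (ξ₀ + t ^ l * ξ₁) - (ξ₀ + s ^ l * ξ₁) = (t ^ l - s ^ l) * ξ₁ := by ring
          rw [this, abs_mul, abs_of_nonneg hξ1] at hd
          exact hd
        rw [le_div_iff₀ hc0]
        calc |t ^ l - s ^ l| * c ≤ |t ^ l - s ^ l| * ξ₁ :=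
              mul_le_mul_of_nonneg_left h1 (abs_nonneg _)
          _ ≤ 2 * Real.sqrt δ := hd2
      exact abs_sub_le_rpow' hl0 (by positivity) hs0 ht0 h2
    have keyneg : ∀ t ∈ S, ∀ s ∈ S, s ≤ 0 → t ≤ 0 → |t - s| ≤ L := by
      intro t ht s hs hs0 ht0
      have h2 : |t ^ l - s ^ l| ≤ 2 * Real.sqrt δ / c := by
        have hd : |(ξ₀ + t ^ l * ξ₁) - (ξ₀ + s ^ l * ξ₁)| ≤ 2 * Real.sqrt δ := by
          calc |(ξ₀ + t ^ l * ξ₁) - (ξ₀ + s ^ l * ξ₁)|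
              ≤ |ξ₀ + t ^ l * ξ₁| + |ξ₀ + s ^ l * ξ₁| := abs_sub _ _
            _ ≤ 2 * Real.sqrt δ := by
                have := ht.2; have := hs.2; linarith
        have hd2 : |t ^ l - s ^ l| * ξ₁ ≤ 2 * Real.sqrt δ := by
          have : (ξ₀ + t ^ l * ξ₁) - (ξ₀ + s ^ l * ξ₁) = (t ^ l - s ^ l) * ξ₁ := by ring
          rw [this, abs_mul, abs_of_nonneg hξ1] at hd
          exact hd
        rw [le_div_iff₀ hc0]
        calc |t ^ l - s ^ l| * c ≤ |t ^ l - s ^ l| * ξ₁ :=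
              mul_le_mul_of_nonneg_left h1 (abs_nonneg _)
          _ ≤ 2 * Real.sqrt δ := hd2
      have h3 : |(-t) ^ l - (-s) ^ l| ≤ 2 * Real.sqrt δ / c := by
        have heq : (-t) ^ l - (-s) ^ l = (-1) ^ l * (t ^ l - s ^ l) := by
          rw [neg_pow t, neg_pow s]; ring
        rw [heq, abs_mul, abs_pow, abs_neg, abs_one, one_pow, one_mul]
        exact h2
      have := abs_sub_le_rpow' hl0 (by positivity) (neg_nonneg.2 hs0) (neg_nonneg.2 ht0) h3
      rwa [show -t - -s = -(t - s) by ring, abs_neg] at this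
    -- bound the measures of the two pieces by the diameter
    have hA : volume (S ∩ Set.Ici 0) ≤ ENNReal.ofReal L := by
      refine (Real.volume_le_diam _).trans (EMetric.diam_le ?_)
      rintro x ⟨hxS, hx0⟩ y ⟨hyS, hy0⟩
      rw [edist_dist, Real.dist_eq]
      exact ENNReal.ofReal_le_ofReal (key x hxS y hyS hy0 hx0)
    have hB : volume (S ∩ Set.Iic 0) ≤ ENNReal.ofReal L := by
      refine (Real.volume_le_diam _).trans (EMetric.diam_le ?_)
      rintro x ⟨hxS, hx0⟩ y ⟨hyS, hy0⟩
      rw [edist_dist, Real.dist_eq]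
      exact ENNReal.ofReal_le_ofReal (keyneg x hxS y hyS hy0 hx0)
    have hcover : S ⊆ (S ∩ Set.Ici 0) ∪ (S ∩ Set.Iic 0) := by
      intro x hx
      rcases le_total 0 x with h | h
      · exact Or.inl ⟨hx, h⟩
      · exact Or.inr ⟨hx, h⟩
    have hLval : 2 * L = 2 * (2 / c) ^ ((1 : ℝ) / l) * δ ^ (1 / (2 * (l : ℝ))) := by
      have h2 : 2 * Real.sqrt δ / c = (2 / c) * Real.sqrt δ := by ring
      rw [hL, h2, Real.mul_rpow (by positivity) (le_of_lt hδs0), Real.sqrt_eq_rpow,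
        ← Real.rpow_mul hδ.le]
      ring_nf
    calc volume S ≤ volume ((S ∩ Set.Ici 0) ∪ (S ∩ Set.Iic 0)) := measure_mono hcover
      _ ≤ volume (S ∩ Set.Ici 0) + volume (S ∩ Set.Iic 0) := measure_union_le _ _
      _ ≤ ENNReal.ofReal L + ENNReal.ofReal L := add_le_add hA hB
      _ = ENNReal.ofReal (2 * L) := by rw [← ENNReal.ofReal_add hL0 hL0]; ring_nf
      _ ≤ ENNReal.ofReal (2 * (2 / c) ^ ((1 : ℝ) / l) * δ ^ (1 / (2 * (l : ℝ)))) := by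
          rw [hLval]
end
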